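/- arXiv:1710.08079 — 3 statements merged into one kernel-verified Lean document; each statement's English description precedes it below -/
import Mathlib

section
/- Under the setup of Lemma (rank-loss potential bound): the N-step potential of rank loss at the zero vector is at most exp(−γ²N/2). That is, if X = (X_1,…,X_k) counts N i.i.d. draws from u^Y_γ, then E[L_rnk^Y(X)] ≤ exp(−γ²N/2). -/
open MeasureTheory ProbabilityTheory Finset Real

/-! Fix `l ∈ Y`, `r ∉ Y` and write `p = a + γ`, `q = a`. The pairwise loss
`𝟙[X_l < X_r] + ½ 𝟙[X_l = X_r]` is at most `ρ ^ X_l * σ ^ X_r` whenever `ρ σ = 1` and `σ ≥ 1`.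
This exponential moment is a product over the `N` independent draws; with `ρ = √q / √p` each
factor equals `1 - p - q + 2 √(p q) = 1 - (√p - √q) ²`. As `γ = (√p - √q) (√p + √q)` and
`(√p + √q) ² ≤ 2 (p + q) ≤ 2`, we get `(√p - √q) ² ≥ γ ² / 2`, so each pairwise loss has
expectation at most `(1 - γ ² / 2) ^ N ≤ exp (-γ ² N / 2)`, and so does their average. -/

section

variable {Ω ι α β κ : Type*} [MeasurableSpace Ω] {μ : Measure Ω}

noncomputable def rankPairLoss (m n : ℕ) : ℝ :=
  (if (m : ℝ) < n then 1 else 0) + 1 / 2 * (if (m : ℝ) = n then 1 else 0)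

def labelCount [Fintype ι] [DecidableEq α] (v : ι → α) (j : α) : ℕ := #{i | v i = j}

lemma rankPairLoss_le_pow_mul_pow {ρ σ : ℝ} (hρ : 0 ≤ ρ) (hσ : 1 ≤ σ) (hρσ : ρ * σ = 1)
    (m n : ℕ) : rankPairLoss m n ≤ ρ ^ m * σ ^ n := by
  rcases lt_trichotomy m n with h | rfl | h
  · have : ρ ^ m * σ ^ n = σ ^ (n - m) := by
      rw [← Nat.add_sub_cancel' h.le, pow_add, ← mul_assoc, ← mul_pow, hρσ, one_pow, one_mul,
        Nat.add_sub_cancel_left]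
    simp [rankPairLoss, h, h.ne, this, one_le_pow₀ hσ]
  · norm_num [rankPairLoss, ← mul_pow, hρσ]
  · have : 0 ≤ ρ ^ m * σ ^ n := by positivity
    simp [rankPairLoss, h.not_gt, h.ne', this]

lemma prod_pow_ite_mul_pow_ite [Fintype ι] [DecidableEq α] (v : ι → α) (l r : α) (ρ σ : ℝ) :
    ∏ i, ρ ^ (if v i = l then 1 else 0) * σ ^ (if v i = r then 1 else 0) =
      ρ ^ labelCount v l * σ ^ labelCount v r := by
  simp only [prod_mul_distrib, prod_pow_eq_pow_sum, sum_boole, labelCount, Nat.cast_id]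

lemma one_sub_sq_sqrt_sub_sqrt_pow_le {a γ : ℝ} (ha : 0 ≤ a) (hγ : 0 ≤ γ) (h : 2 * a + γ ≤ 1)
    (N : ℕ) : (1 - (√(a + γ) - √a) ^ 2) ^ N ≤ exp (-γ ^ 2 * N / 2) := by
  set t := √(a + γ)
  set s := √a
  have hs2 : s ^ 2 = a := sq_sqrt ha
  have ht2 : t ^ 2 = a + γ := sq_sqrt (by linarith)
  have hs : 0 ≤ s := sqrt_nonneg a
  have hst : s ≤ t := sqrt_le_sqrt (by linarith)
  have hgap : γ ^ 2 / 2 ≤ (t - s) ^ 2 := by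
    have hγts : γ = (t - s) * (t + s) := by linear_combination hs2 - ht2
    have hsum : (t + s) ^ 2 ≤ 2 := by nlinarith [sq_nonneg (t - s)]
    rw [hγts, mul_pow]
    nlinarith [sq_nonneg (t - s)]
  have hgap1 : (t - s) ^ 2 ≤ 1 := by nlinarith
  calc (1 - (t - s) ^ 2) ^ N ≤ exp (-(t - s) ^ 2) ^ N :=
        pow_le_pow_left₀ (by linarith) (one_sub_le_exp_neg _) N
    _ = exp (-(t - s) ^ 2 * N) := by rw [← exp_nat_mul]; ring_nf
    _ ≤ exp (-γ ^ 2 * N / 2) := exp_le_exp.2 (by nlinarith [N.cast_nonneg (α := ℝ)])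

lemma integrable_comp_of_finite [Finite β] [MeasurableSpace β] [MeasurableSingletonClass β]
    [IsFiniteMeasure μ] {X : Ω → β} (hX : Measurable X) (f : β → ℝ) :
    Integrable (fun ω => f (X ω)) μ :=
  Integrable.of_finite.comp_measurable hX

lemma integral_comp_eq_sum [Fintype β] [MeasurableSpace β] [MeasurableSingletonClass β]
    [IsFiniteMeasure μ] {X : Ω → β} (hX : Measurable X) (f : β → ℝ) :
    ∫ ω, f (X ω) ∂μ = ∑ j, μ.real (X ⁻¹' {j}) * f j := by
  rw [← integral_map hX.aemeasurable (measurable_of_finite f).aestronglyMeasurable,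
    integral_fintype Integrable.of_finite]
  simp [map_measureReal_apply hX (measurableSet_singleton _)]

lemma integral_pow_ite_mul_pow_ite [Fintype α] [DecidableEq α] [MeasurableSpace α]
    [MeasurableSingletonClass α] [IsProbabilityMeasure μ] {X : Ω → α} (hX : Measurable X)
    {l r : α} (hlr : l ≠ r) (ρ σ : ℝ) :
    ∫ ω, ρ ^ (if X ω = l then 1 else 0) * σ ^ (if X ω = r then 1 else 0) ∂μ =
      1 + (ρ - 1) * μ.real (X ⁻¹' {l}) + (σ - 1) * μ.real (X ⁻¹' {r}) := by
  have hsplit : ∀ j, ρ ^ (if j = l then 1 else 0) * σ ^ (if j = r then 1 else 0) =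
      1 + (ρ - 1) * (if j = l then 1 else 0) + (σ - 1) * (if j = r then 1 else 0) := by
    intro j
    by_cases hl : j = l
    · simp [hl, hlr]
    · by_cases hr : j = r <;> simp [hl, hr, hlr.symm]
  have htotal : ∑ j, μ.real (X ⁻¹' {j}) = 1 := by
    rw [sum_measureReal_preimage_singleton _ fun j _ => hX (measurableSet_singleton j)]
    simp
  rw [integral_comp_eq_sum hX fun j =>
    ρ ^ (if j = l then 1 else 0) * σ ^ (if j = r then 1 else 0)]
  simp only [hsplit, mul_add, sum_add_distrib, mul_one, htotal, mul_ite, mul_zero, sum_ite_eq',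
    mem_univ, if_true]
  ring

lemma measureReal_preimage_singleton_add_le_one [IsProbabilityMeasure μ] [MeasurableSpace α]
    [MeasurableSingletonClass α] {X : Ω → α} (hX : Measurable X) {l r : α} (hlr : l ≠ r) :
    μ.real (X ⁻¹' {l}) + μ.real (X ⁻¹' {r}) ≤ 1 := by
  rw [← measureReal_union ((Set.disjoint_singleton.2 hlr).preimage X)
    (hX (measurableSet_singleton r))]
  exact measureReal_le_one

lemma integral_inv_card_mul_sum_sum_le {s : Finset β} {t : Finset κ} (hs : s.Nonempty)
    (ht : t.Nonempty) {f : β → κ → Ω → ℝ} (hf : ∀ l ∈ s, ∀ r ∈ t, Integrable (f l r) μ) {B : ℝ}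
    (hB : ∀ l ∈ s, ∀ r ∈ t, ∫ ω, f l r ω ∂μ ≤ B) :
    ∫ ω, 1 / ((#s : ℝ) * #t) * ∑ l ∈ s, ∑ r ∈ t, f l r ω ∂μ ≤ B := by
  rw [integral_const_mul, integral_finsetSum _ fun l hl => integrable_finsetSum _ (hf l hl)]
  calc 1 / ((#s : ℝ) * #t) * ∑ l ∈ s, ∫ ω, ∑ r ∈ t, f l r ω ∂μ
      = 1 / ((#s : ℝ) * #t) * ∑ l ∈ s, ∑ r ∈ t, ∫ ω, f l r ω ∂μ := by
        congr 1
        exact sum_congr rfl fun l hl => integral_finsetSum _ (hf l hl)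
    _ ≤ 1 / ((#s : ℝ) * #t) * ∑ l ∈ s, ∑ r ∈ t, B := by
        gcongr with l hl r hr
        exact hB l hl r hr
    _ = B := by
        have : (0 : ℝ) < #s * #t := by positivity
        simp only [sum_const, nsmul_eq_mul]
        field_simp

lemma integrable_rankPairLoss [Fintype ι] [Fintype α] [DecidableEq α] [MeasurableSpace α]
    [MeasurableSingletonClass α] [IsFiniteMeasure μ] {D : ι → Ω → α}
    (hD : ∀ i, Measurable (D i)) (l r : α) :
    Integrable (fun ω => rankPairLoss (labelCount (D · ω) l) (labelCount (D · ω) r)) μ :=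
  integrable_comp_of_finite (measurable_pi_lambda _ hD)
    (fun v => rankPairLoss (labelCount v l) (labelCount v r))

theorem integral_rankPairLoss_le [Fintype ι] [Fintype α] [DecidableEq α] [MeasurableSpace α]
    [MeasurableSingletonClass α] [IsProbabilityMeasure μ] {D : ι → Ω → α}
    (hD : ∀ i, Measurable (D i)) (hindep : iIndepFun D μ) {l r : α} (hlr : l ≠ r) {p q : ℝ}
    (hq : 0 < q) (hqp : q ≤ p) (hl : ∀ i, μ.real (D i ⁻¹' {l}) = p)
    (hr : ∀ i, μ.real (D i ⁻¹' {r}) = q) :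
    ∫ ω, rankPairLoss (labelCount (D · ω) l) (labelCount (D · ω) r) ∂μ ≤
      (1 - (√p - √q) ^ 2) ^ Fintype.card ι := by
  have hp : 0 < p := hq.trans_le hqp
  have hs : 0 < √p := sqrt_pos.2 hp
  have ht : 0 < √q := sqrt_pos.2 hq
  set g : α → ℝ := fun j =>
    (√q / √p) ^ (if j = l then 1 else 0) * (√p / √q) ^ (if j = r then 1 else 0)
  have hpoint : ∀ ω, rankPairLoss (labelCount (D · ω) l) (labelCount (D · ω) r) ≤
      ∏ i, g (D i ω) := fun ω => by
    rw [prod_pow_ite_mul_pow_ite]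
    exact rankPairLoss_le_pow_mul_pow (by positivity)
      ((one_le_div ht).2 (sqrt_le_sqrt hqp)) (by field_simp) _ _
  have hfactor : ∀ i, ∫ ω, g (D i ω) ∂μ = 1 - (√p - √q) ^ 2 := fun i => by
    rw [integral_pow_ite_mul_pow_ite (hD i) hlr, hl, hr]
    field_simp
    linear_combination
      (-(√q * (√q - √p))) * sq_sqrt hp.le + (-(√p * (√p - √q))) * sq_sqrt hq.le
  calc _ ≤ ∫ ω, ∏ i, g (D i ω) ∂μ :=
        integral_mono (integrable_rankPairLoss hD l r)
          (integrable_comp_of_finite (measurable_pi_lambda _ hD) fun v => ∏ i, g (v i)) hpoint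
    _ = ∏ i, ∫ ω, g (D i ω) ∂μ := hindep.integral_fun_prod_comp (fun i => (hD i).aemeasurable)
        fun _ => (measurable_of_finite g).aestronglyMeasurable
    _ = _ := by simp [hfactor]

end

theorem stmt_11_general {Ω : Type*} [MeasurableSpace Ω] (μ : Measure Ω) [IsProbabilityMeasure μ]
    (k N : ℕ) (Y : Finset (Fin k)) (hY : Y.Nonempty) (hY' : Y ≠ Finset.univ)
    (γ a : ℝ) (hγ0 : 0 < γ) (ha : 0 < a)
    (D : Fin N → Ω → Fin k) (hmeas : ∀ i, Measurable (D i))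
    (hindep : iIndepFun D μ)
    (hident : ∀ i j, μ {ω | D i ω = j} =
      ENNReal.ofReal (if j ∈ Y then a + γ else a)) :
    ∫ ω, (1 / ((Y.card : ℝ) * Yᶜ.card)) *
        ∑ l ∈ Y, ∑ r ∈ Yᶜ,
          ((if ((Finset.univ.filter fun i => D i ω = l).card : ℝ) <
              (Finset.univ.filter fun i => D i ω = r).card then (1 : ℝ) else 0) +
            (1 / 2) * (if ((Finset.univ.filter fun i => D i ω = l).card : ℝ) =
              (Finset.univ.filter fun i => D i ω = r).card then 1 else 0)) ∂μ ≤
      Real.exp (-γ ^ 2 * N / 2) := by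
  have hprob : ∀ i j, μ.real (D i ⁻¹' {j}) = if j ∈ Y then a + γ else a := fun i j => by
    rw [measureReal_def, show D i ⁻¹' {j} = {ω | D i ω = j} from rfl, hident,
      ENNReal.toReal_ofReal (by split_ifs <;> positivity)]
  have hYc : Yᶜ.Nonempty := by simpa [nonempty_iff_ne_empty] using hY'
  have hlr {l r} (hl : l ∈ Y) (hr : r ∈ Yᶜ) : l ≠ r := ne_of_mem_of_not_mem hl (mem_compl.1 hr)
  have hpair : ∀ l ∈ Y, ∀ r ∈ Yᶜ,
      ∫ ω, rankPairLoss (labelCount (D · ω) l) (labelCount (D · ω) r) ∂μ ≤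
        (1 - (√(a + γ) - √a) ^ 2) ^ N := fun l hl r hr => by
    simpa using integral_rankPairLoss_le hmeas hindep (hlr hl hr) ha (by linarith)
      (fun i => by rw [hprob, if_pos hl]) (fun i => by rw [hprob, if_neg (mem_compl.1 hr)])
  have hgap : (1 - (√(a + γ) - √a) ^ 2) ^ N ≤ exp (-γ ^ 2 * N / 2) := by
    rcases N.eq_zero_or_pos with rfl | hN
    · simp
    obtain ⟨l, hl⟩ := hY
    obtain ⟨r, hr⟩ := hYc
    have hpq := measureReal_preimage_singleton_add_le_one (μ := μ) (hmeas ⟨0, hN⟩) (hlr hl hr)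
    rw [hprob, hprob, if_pos hl, if_neg (mem_compl.1 hr)] at hpq
    exact one_sub_sq_sqrt_sub_sqrt_pow_le ha.le hγ0.le (by linarith) N
  refine (integral_inv_card_mul_sum_sum_le hY hYc
    (f := fun l r ω => rankPairLoss (labelCount (D · ω) l) (labelCount (D · ω) r))
    (fun l _ r _ => integrable_rankPairLoss hmeas l r) hpair).trans hgap

/-- Rank-loss potential bound: if `X` counts `N` i.i.d. draws `D i` from the
edge-over-random distribution `u^Y_γ`, then `E[L_rnk^Y(X)] ≤ exp(-γ²N/2)`. -/
theorem stmt_11 {Ω : Type*} [MeasurableSpace Ω] (μ : Measure Ω) [IsProbabilityMeasure μ]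
    (k N : ℕ) (hk : 2 ≤ k) (Y : Finset (Fin k)) (hY : Y.Nonempty) (hY' : Y ≠ Finset.univ)
    (γ a : ℝ) (hγ0 : 0 < γ) (hγ1 : γ < 1) (ha : 0 < a)
    (D : Fin N → Ω → Fin k) (hmeas : ∀ i, Measurable (D i))
    (hindep : iIndepFun D μ)
    (hident : ∀ i j, μ {ω | D i ω = j} =
      ENNReal.ofReal (if j ∈ Y then a + γ else a)) :
    ∫ ω, (1 / ((Y.card : ℝ) * Yᶜ.card)) *
        ∑ l ∈ Y, ∑ r ∈ Yᶜ,
          ((if ((Finset.univ.filter fun i => D i ω = l).card : ℝ) <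
              (Finset.univ.filter fun i => D i ω = r).card then (1 : ℝ) else 0) +
            (1 / 2) * (if ((Finset.univ.filter fun i => D i ω = l).card : ℝ) =
              (Finset.univ.filter fun i => D i ω = r).card then 1 else 0)) ∂μ ≤
      Real.exp (-γ ^ 2 * N / 2) :=
  stmt_11_general μ k N Y hY hY' γ a hγ0 ha D hmeas hindep hident
end

section
/- Under the same random-walk setup, the N-step potential of hinge loss at the zero vector is at most (N+1)·exp(−γ²N/2): E[L_hinge^Y(X)] ≤ (N+1)·exp(−γ²N/2). -/
/-!
Fix `l ∈ Y` and `r ∉ Y`. The difference `S = X_r - X_l` is a sum of `N` independent increments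
with values in `{-1, 0, 1}`, taking the value `1` with probability `q = a` and `-1` with probability
`p = a + γ`. Since `S` is an integer at most `N`, `(1 + S)₊ ≤ (N + 1) e^{tS}` for every `t ≥ 0`, so
the hinge term is bounded by `(N + 1)` times the moment generating function of `S`, which factors
over the draws. The Chernoff choice `e^t = √(p/q)` makes each factor equal to
`1 - (√p - √q)² ≤ exp (-(p - q)² / 2)`. The weight `1 / (|Y| |Yᶜ|)` then averages the pair bounds.
-/

open MeasureTheory ProbabilityTheory Real Finset

lemma sq_sub_div_two_le_sq_sqrt_sub_sqrt {p q : ℝ} (hq : 0 ≤ q) (hqp : q ≤ p) (hpq : p + q ≤ 1) :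
    (p - q) ^ 2 / 2 ≤ (√p - √q) ^ 2 := by
  have hp : 0 ≤ p := hq.trans hqp
  have hdiff : p - q = (√p - √q) * (√p + √q) := by
    linear_combination -(sq_sqrt hp) + sq_sqrt hq
  have hsum : (√p + √q) ^ 2 ≤ 2 := by
    nlinarith [sq_sqrt hp, sq_sqrt hq, sq_nonneg (√p - √q)]
  rw [hdiff, mul_pow]
  nlinarith [sq_nonneg (√p - √q)]

lemma mul_exp_add_mul_exp_neg_le {p q : ℝ} (hq : 0 < q) (hqp : q ≤ p) (hpq : p + q ≤ 1) :
    q * exp (log (√p / √q)) + p * exp (-log (√p / √q)) + (1 - p - q) ≤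
      exp (-(p - q) ^ 2 / 2) := by
  have hp : 0 < p := hq.trans_le hqp
  have hsp : 0 < √p := sqrt_pos.2 hp
  have hsq : 0 < √q := sqrt_pos.2 hq
  have hbhatt : q * exp (log (√p / √q)) + p * exp (-log (√p / √q)) + (1 - p - q) =
      1 - (√p - √q) ^ 2 := by
    rw [exp_neg, exp_log (div_pos hsp hsq), inv_div]
    field_simp
    nlinarith [sq_sqrt hp.le, sq_sqrt hq.le]
  calc _ = 1 - (√p - √q) ^ 2 := hbhatt
    _ ≤ exp (-(√p - √q) ^ 2) := one_sub_le_exp_neg _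
    _ ≤ exp (-(p - q) ^ 2 / 2) := by
      gcongr
      linarith [sq_sub_div_two_le_sq_sqrt_sub_sqrt hq.le hqp hpq]

section

variable {α : Type*} [DecidableEq α]

def countIncrement (l r x : α) : ℝ := (if x = r then 1 else 0) - (if x = l then 1 else 0)

lemma card_filter_sub_card_filter_eq_sum {ι β : Type*} [Fintype ι] (D : ι → β → α) (l r : α)
    (ω : β) :
    ((univ.filter fun i => D i ω = r).card : ℝ) - (univ.filter fun i => D i ω = l).card =
      ∑ i, countIncrement l r (D i ω) := by
  simp only [countIncrement, sum_sub_distrib, natCast_card_filter]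

lemma exp_mul_countIncrement {l r : α} (hlr : l ≠ r) (t : ℝ) (x : α) :
    exp (t * countIncrement l r x) =
      1 + (exp t - 1) * ({r} : Set α).indicator 1 x +
        (exp (-t) - 1) * ({l} : Set α).indicator 1 x := by
  by_cases hr : x = r
  · subst hr; simp [countIncrement, hlr.symm]
  by_cases hl : x = l
  · subst hl; simp [countIncrement, hr]
  · simp [countIncrement, hr, hl]

lemma max_one_add_sub_le_mul_exp {x y N : ℕ} (hy : y ≤ N) {t : ℝ} (ht : 0 ≤ t) :
    max (1 + (y : ℝ) - x) 0 ≤ (N + 1) * exp (t * (y - x)) := by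
  rcases le_or_gt x y with hxy | hyx
  · have hN : (y : ℝ) ≤ N := by exact_mod_cast hy
    have hexp : 1 ≤ exp (t * (y - x)) :=
      one_le_exp (mul_nonneg ht (sub_nonneg.2 (by exact_mod_cast hxy)))
    refine max_le ?_ (by positivity)
    nlinarith [(Nat.cast_nonneg x : (0 : ℝ) ≤ x)]
  · have : (y : ℝ) + 1 ≤ x := by exact_mod_cast hyx
    exact max_le (by linarith [show 0 ≤ (N + 1) * exp (t * (y - x)) by positivity]) (by positivity)

lemma max_one_add_card_sub_card_le_mul_exp {ι β : Type*} [Fintype ι] (D : ι → β → α) (l r : α)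
    {t : ℝ} (ht : 0 ≤ t) (ω : β) :
    max (1 + ((univ.filter fun i => D i ω = r).card : ℝ) - (univ.filter fun i => D i ω = l).card) 0
      ≤ (Fintype.card ι + 1) * exp (t * ∑ i, countIncrement l r (D i ω)) := by
  rw [← card_filter_sub_card_filter_eq_sum]
  exact max_one_add_sub_le_mul_exp ((card_filter_le _ _).trans_eq card_univ) ht

lemma exp_mul_countIncrement_comp {Ω : Type*} {X : Ω → α} {l r : α} (hlr : l ≠ r) (t : ℝ) :
    (fun ω => exp (t * countIncrement l r (X ω))) = fun ω =>
      1 + (exp t - 1) * (X ⁻¹' {r}).indicator 1 ω + (exp (-t) - 1) * (X ⁻¹' {l}).indicator 1 ω := by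
  ext ω
  simp only [exp_mul_countIncrement hlr, ← Set.indicator_comp_right, Pi.one_comp]

variable [MeasurableSpace α] [MeasurableSingletonClass α]
variable {Ω : Type*} [MeasurableSpace Ω] {μ : Measure Ω} [IsProbabilityMeasure μ]

lemma measurable_countIncrement (l r : α) : Measurable (countIncrement l r) :=
  (measurable_const.ite (measurableSet_singleton r) measurable_const).sub
    (measurable_const.ite (measurableSet_singleton l) measurable_const)

lemma integrable_exp_mul_countIncrement {X : Ω → α} (hX : Measurable X) {l r : α} (hlr : l ≠ r)
    (t : ℝ) : Integrable (fun ω => exp (t * countIncrement l r (X ω))) μ := by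
  rw [exp_mul_countIncrement_comp hlr]
  exact ((integrable_const 1).add (((integrable_const (1 : ℝ)).indicator
    (hX (measurableSet_singleton r))).const_mul _)).add
    (((integrable_const (1 : ℝ)).indicator (hX (measurableSet_singleton l))).const_mul _)

lemma mgf_countIncrement {X : Ω → α} (hX : Measurable X) {l r : α} (hlr : l ≠ r) (t : ℝ) :
    mgf (fun ω => countIncrement l r (X ω)) μ t =
      1 + (exp t - 1) * μ.real (X ⁻¹' {r}) + (exp (-t) - 1) * μ.real (X ⁻¹' {l}) := by
  have hr : Integrable ((X ⁻¹' {r}).indicator (1 : Ω → ℝ)) μ :=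
    (integrable_const 1).indicator (hX (measurableSet_singleton r))
  have hl : Integrable ((X ⁻¹' {l}).indicator (1 : Ω → ℝ)) μ :=
    (integrable_const 1).indicator (hX (measurableSet_singleton l))
  rw [mgf, exp_mul_countIncrement_comp hlr, integral_add, integral_add, integral_const_mul,
    integral_const_mul, integral_indicator_one (hX (measurableSet_singleton r)),
    integral_indicator_one (hX (measurableSet_singleton l))]
  · simp
  exacts [integrable_const 1, hr.const_mul _, (integrable_const 1).add (hr.const_mul _),
    hl.const_mul _]

lemma mgf_countIncrement_le {X : Ω → α} (hX : Measurable X) {l r : α} (hlr : l ≠ r) {p q : ℝ}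
    (hq : 0 < q) (hqp : q ≤ p) (hl : μ.real (X ⁻¹' {l}) = p) (hr : μ.real (X ⁻¹' {r}) = q) :
    mgf (fun ω => countIncrement l r (X ω)) μ (log (√p / √q)) ≤ exp (-(p - q) ^ 2 / 2) := by
  have hpq : p + q ≤ 1 := by
    rw [← hl, ← hr, ← measureReal_union _ (hX (measurableSet_singleton r)), ← Set.preimage_union]
    · exact measureReal_le_one
    · exact (Set.disjoint_singleton.2 hlr).preimage X
  calc _ = q * exp (log (√p / √q)) + p * exp (-log (√p / √q)) + (1 - p - q) := by
        rw [mgf_countIncrement hX hlr, hl, hr]; ring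
    _ ≤ exp (-(p - q) ^ 2 / 2) := mul_exp_add_mul_exp_neg_le hq hqp hpq

variable {ι : Type*} [Fintype ι]

lemma integrable_max_one_add_card_sub_card {D : ι → Ω → α} (hD : ∀ i, Measurable (D i))
    (l r : α) :
    Integrable (fun ω => max (1 + ((univ.filter fun i => D i ω = r).card : ℝ) -
      (univ.filter fun i => D i ω = l).card) 0) μ := by
  have hmeas : Measurable fun ω => max (1 + ((univ.filter fun i => D i ω = r).card : ℝ) -
      (univ.filter fun i => D i ω = l).card) 0 := by
    simp_rw [add_sub_assoc, card_filter_sub_card_filter_eq_sum]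
    exact (measurable_const.add (Finset.measurable_sum _ fun i _ =>
      (measurable_countIncrement l r).comp (hD i))).max measurable_const
  refine (integrable_const ((Fintype.card ι : ℝ) + 1)).mono' hmeas.aestronglyMeasurable
    (ae_of_all _ fun ω => ?_)
  rw [Real.norm_of_nonneg (le_max_right _ _)]
  simpa only [zero_mul, exp_zero, mul_one] using max_one_add_card_sub_card_le_mul_exp D l r le_rfl ω

theorem integral_max_one_add_card_sub_card_le {D : ι → Ω → α} (hD : ∀ i, Measurable (D i))
    (hindep : iIndepFun D μ) {l r : α} (hlr : l ≠ r) {p q : ℝ} (hq : 0 < q) (hqp : q ≤ p)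
    (hl : ∀ i, μ.real (D i ⁻¹' {l}) = p) (hr : ∀ i, μ.real (D i ⁻¹' {r}) = q) :
    ∫ ω, max (1 + ((univ.filter fun i => D i ω = r).card : ℝ) -
      (univ.filter fun i => D i ω = l).card) 0 ∂μ ≤
      (Fintype.card ι + 1) * exp (-(p - q) ^ 2 * Fintype.card ι / 2) := by
  set t := log (√p / √q)
  have ht : 0 ≤ t := log_nonneg ((one_le_div (sqrt_pos.2 hq)).2 (sqrt_le_sqrt hqp))
  set Z : ι → Ω → ℝ := fun i ω => countIncrement l r (D i ω)
  have hZ : ∀ i, Measurable (Z i) := fun i => (measurable_countIncrement l r).comp (hD i)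
  have hZindep : iIndepFun Z μ := hindep.comp _ fun _ => measurable_countIncrement l r
  have hexp : Integrable (fun ω => exp (t * (∑ i, Z i) ω)) μ :=
    hZindep.integrable_exp_mul_sum hZ fun i _ => integrable_exp_mul_countIncrement (hD i) hlr t
  calc _ ≤ ∫ ω, (Fintype.card ι + 1) * exp (t * (∑ i, Z i) ω) ∂μ := by
        refine integral_mono_of_nonneg (ae_of_all _ fun ω => le_max_right _ _)
          (hexp.const_mul _) (ae_of_all _ fun ω => ?_)
        simpa only [Finset.sum_apply] using max_one_add_card_sub_card_le_mul_exp D l r ht ω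
    _ = (Fintype.card ι + 1) * ∏ i, mgf (Z i) μ t := by
        rw [integral_const_mul, ← hZindep.mgf_sum hZ]; rfl
    _ ≤ (Fintype.card ι + 1) * ∏ _i : ι, exp (-(p - q) ^ 2 / 2) := by
        gcongr with i
        · exact fun i _ => mgf_nonneg
        · exact mgf_countIncrement_le (hD i) hlr hq hqp (hl i) (hr i)
    _ = (Fintype.card ι + 1) * exp (-(p - q) ^ 2 * Fintype.card ι / 2) := by
        rw [prod_const, card_univ, ← exp_nat_mul]; ring_nf

end

theorem stmt_12_general {Ω : Type*} [MeasurableSpace Ω] (μ : Measure Ω) [IsProbabilityMeasure μ]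
    (k N : ℕ) (Y : Finset (Fin k))
    (γ a : ℝ) (hγ0 : 0 < γ) (ha : 0 < a)
    (D : Fin N → Ω → Fin k) (hmeas : ∀ i, Measurable (D i))
    (hindep : iIndepFun D μ)
    (hident : ∀ i j, μ {ω | D i ω = j} =
      ENNReal.ofReal (if j ∈ Y then a + γ else a)) :
    ∫ ω, (1 / ((Y.card : ℝ) * Yᶜ.card)) *
        ∑ l ∈ Y, ∑ r ∈ Yᶜ,
          max (1 + ((Finset.univ.filter fun i => D i ω = r).card : ℝ) -
            (Finset.univ.filter fun i => D i ω = l).card) 0 ∂μ ≤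
      (N + 1) * Real.exp (-γ ^ 2 * N / 2) := by
  have hprob : ∀ i j, μ.real (D i ⁻¹' {j}) = if j ∈ Y then a + γ else a := fun i j => by
    change (μ {ω | D i ω = j}).toReal = _
    rw [hident, ENNReal.toReal_ofReal (by split_ifs <;> positivity)]
  have hpair : ∀ l ∈ Y, ∀ r ∈ Yᶜ,
      ∫ ω, max (1 + ((univ.filter fun i => D i ω = r).card : ℝ) -
        (univ.filter fun i => D i ω = l).card) 0 ∂μ ≤ (N + 1) * exp (-γ ^ 2 * N / 2) := by
    intro l hl r hr
    simpa using integral_max_one_add_card_sub_card_le hmeas hindep (ne_of_mem_of_not_mem hl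
      (mem_compl.1 hr)) ha (le_add_of_nonneg_right hγ0.le) (fun i => by rw [hprob, if_pos hl])
      (fun i => by rw [hprob, if_neg (mem_compl.1 hr)])
  have hint := integrable_max_one_add_card_sub_card (μ := μ) hmeas
  rw [integral_const_mul,
    integral_finsetSum _ fun l _ => integrable_finsetSum _ fun r _ => hint l r]
  calc _ ≤ 1 / ((Y.card : ℝ) * Yᶜ.card) * ∑ _l ∈ Y, ∑ _r ∈ Yᶜ, (N + 1) * exp (-γ ^ 2 * N / 2) := by
        gcongr with l hl
        rw [integral_finsetSum _ fun r _ => hint l r]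
        exact sum_le_sum fun r hr => hpair l hl r hr
    _ = ((Y.card : ℝ) * Yᶜ.card) / ((Y.card : ℝ) * Yᶜ.card) * ((N + 1) * exp (-γ ^ 2 * N / 2)) := by
        simp only [sum_const, nsmul_eq_mul]; ring
    -- `c / c ≤ 1` also when `Y` or `Yᶜ` is empty, where the weight is `1 / 0 = 0`
    _ ≤ (N + 1) * exp (-γ ^ 2 * N / 2) := mul_le_of_le_one_left (by positivity) (div_self_le_one _)

/-- Hinge-loss potential bound: `E[L_hinge^Y(X)] ≤ (N+1)·exp(-γ²N/2)` where `X`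
counts `N` i.i.d. draws from the edge-over-random distribution `u^Y_γ`. -/
theorem stmt_12 {Ω : Type*} [MeasurableSpace Ω] (μ : Measure Ω) [IsProbabilityMeasure μ]
    (k N : ℕ) (hk : 2 ≤ k) (Y : Finset (Fin k)) (hY : Y.Nonempty) (hY' : Y ≠ Finset.univ)
    (γ a : ℝ) (hγ0 : 0 < γ) (hγ1 : γ < 1) (ha : 0 < a)
    (D : Fin N → Ω → Fin k) (hmeas : ∀ i, Measurable (D i))
    (hindep : iIndepFun D μ)
    (hident : ∀ i j, μ {ω | D i ω = j} =
      ENNReal.ofReal (if j ∈ Y then a + γ else a)) :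
    ∫ ω, (1 / ((Y.card : ℝ) * Yᶜ.card)) *
        ∑ l ∈ Y, ∑ r ∈ Yᶜ,
          max (1 + ((Finset.univ.filter fun i => D i ω = r).card : ℝ) -
            (Finset.univ.filter fun i => D i ω = l).card) 0 ∂μ ≤
      (N + 1) * Real.exp (-γ ^ 2 * N / 2) :=
  stmt_12_general μ k N Y γ a hγ0 ha D hmeas hindep hident
end

section
/- For the hinge-loss potentials, the per-round weight is bounded by 2: for any state vector s ∈ ℝ^k, any two labels l* ∈ Y and r* ∈ Yᶜ, and any distribution of the random count vector X, E[L_hinge^Y(s + e_{r*} + X)] − E[L_hinge^Y(s + e_{l*} + X)] ≤ 2. -/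
open MeasureTheory

/-!
Shifting one unit from `l* ∈ Y` to `r* ∉ Y` increases the margin `1 + v r - v l` of a pair
`(l, r) ∈ Y × Yᶜ` by `[r = r*] + [l = l*]`, and `t ↦ max t 0` is 1-Lipschitz, so the weighted sum of
hinge terms grows by at most `w_Y (|Y| + |Yᶜ|) = 1/|Yᶜ| + 1/|Y| ≤ 2`. This holds pointwise,
hence also in expectation.
-/

section Hinge

open Finset

lemma max_zero_sub_max_zero_le (a b : ℝ) : max a 0 - max b 0 ≤ max (a - b) 0 := by
  simpa using max_sub_max_le_max a 0 b 0

variable {ι : Type*} [DecidableEq ι]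

lemma hinge_term_add_single_sub_le (v : ι → ℝ) {lstar rstar l r : ι}
    (hl : l ≠ rstar) (hr : r ≠ lstar) :
    max (1 + (v + Pi.single rstar 1 : ι → ℝ) r - (v + Pi.single rstar 1 : ι → ℝ) l) 0
      - max (1 + (v + Pi.single lstar 1 : ι → ℝ) r - (v + Pi.single lstar 1 : ι → ℝ) l) 0
      ≤ (Pi.single rstar 1 : ι → ℝ) r + (Pi.single lstar 1 : ι → ℝ) l := by
  have hnonneg : 0 ≤ (Pi.single rstar 1 : ι → ℝ) r + (Pi.single lstar 1 : ι → ℝ) l := by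
    simp only [Pi.single_apply]; positivity
  refine (max_zero_sub_max_zero_le _ _).trans (max_le (le_of_eq ?_) hnonneg)
  simp only [Pi.add_apply, Pi.single_eq_of_ne hl, Pi.single_eq_of_ne hr]
  ring

variable [Fintype ι]

noncomputable def hingeLoss (Y : Finset ι) (v : ι → ℝ) : ℝ :=
  (1 / ((#Y : ℝ) * #Yᶜ)) * ∑ l ∈ Y, ∑ r ∈ Yᶜ, max (1 + v r - v l) 0

lemma hingeLoss_add_single_sub_le (v : ι → ℝ) {Y : Finset ι} {lstar rstar : ι}
    (hl : lstar ∈ Y) (hr : rstar ∈ Yᶜ) :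
    hingeLoss Y (v + Pi.single rstar 1) - hingeLoss Y (v + Pi.single lstar 1) ≤ 2 := by
  have hY : (1 : ℝ) ≤ #Y := by exact_mod_cast card_pos.mpr ⟨lstar, hl⟩
  have hYc : (1 : ℝ) ≤ #Yᶜ := by exact_mod_cast card_pos.mpr ⟨rstar, hr⟩
  have hsum : ∑ l ∈ Y, ∑ r ∈ Yᶜ,
      ((Pi.single rstar 1 : ι → ℝ) r + (Pi.single lstar 1 : ι → ℝ) l) = #Y + #Yᶜ := by
    simp [sum_add_distrib, hl, hr, Pi.single_apply, add_comm]
  calc hingeLoss Y (v + Pi.single rstar 1) - hingeLoss Y (v + Pi.single lstar 1)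
      ≤ (1 / ((#Y : ℝ) * #Yᶜ)) * (#Y + #Yᶜ) := by
        rw [hingeLoss, hingeLoss, ← mul_sub, ← sum_sub_distrib, ← hsum]
        gcongr with l hlY
        rw [← sum_sub_distrib]
        gcongr with r hrY
        exact hinge_term_add_single_sub_le v (ne_of_mem_of_not_mem hlY (mem_compl.mp hr))
          (ne_of_mem_of_not_mem hl (mem_compl.mp hrY)).symm
    _ = 1 / #Yᶜ + 1 / #Y := by field_simp
    _ ≤ 2 := by
        linarith [div_le_one_of_le₀ hY (by positivity), div_le_one_of_le₀ hYc (by positivity)]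

end Hinge

theorem stmt_13_general {Ω : Type*} [MeasurableSpace Ω] (μ : Measure Ω) [IsProbabilityMeasure μ]
    (k : ℕ) (Y : Finset (Fin k))
    (s : Fin k → ℝ) (lstar rstar : Fin k) (hl : lstar ∈ Y) (hr : rstar ∈ Yᶜ)
    (X : Ω → Fin k → ℝ)
    (hint_r : Integrable (fun ω =>
      (1 / ((Y.card : ℝ) * Yᶜ.card)) *
        ∑ l ∈ Y, ∑ r ∈ Yᶜ,
          max (1 + (s + Pi.single rstar 1 + X ω : Fin k → ℝ) r -
            (s + Pi.single rstar 1 + X ω : Fin k → ℝ) l) 0) μ)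
    (hint_l : Integrable (fun ω =>
      (1 / ((Y.card : ℝ) * Yᶜ.card)) *
        ∑ l ∈ Y, ∑ r ∈ Yᶜ,
          max (1 + (s + Pi.single lstar 1 + X ω : Fin k → ℝ) r -
            (s + Pi.single lstar 1 + X ω : Fin k → ℝ) l) 0) μ) :
    (∫ ω, (1 / ((Y.card : ℝ) * Yᶜ.card)) *
        ∑ l ∈ Y, ∑ r ∈ Yᶜ,
          max (1 + (s + Pi.single rstar 1 + X ω : Fin k → ℝ) r -
            (s + Pi.single rstar 1 + X ω : Fin k → ℝ) l) 0 ∂μ) -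
      (∫ ω, (1 / ((Y.card : ℝ) * Yᶜ.card)) *
        ∑ l ∈ Y, ∑ r ∈ Yᶜ,
          max (1 + (s + Pi.single lstar 1 + X ω : Fin k → ℝ) r -
            (s + Pi.single lstar 1 + X ω : Fin k → ℝ) l) 0 ∂μ) ≤ 2 := by
  have key : ∀ ω, hingeLoss Y (s + Pi.single rstar 1 + X ω)
      - hingeLoss Y (s + Pi.single lstar 1 + X ω) ≤ 2 := fun ω => by
    simpa only [add_right_comm s] using hingeLoss_add_single_sub_le (s + X ω) hl hr
  rw [← integral_sub hint_r hint_l]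
  calc _ ≤ ∫ _, (2 : ℝ) ∂μ := integral_mono (hint_r.sub hint_l) (integrable_const 2) key
    _ = 2 := by simp

theorem stmt_13 {Ω : Type*} [MeasurableSpace Ω] (μ : Measure Ω) [IsProbabilityMeasure μ]
    (k : ℕ) (hk : 2 ≤ k) (Y : Finset (Fin k)) (hY : Y.Nonempty) (hY' : Y ≠ Finset.univ)
    (s : Fin k → ℝ) (lstar rstar : Fin k) (hl : lstar ∈ Y) (hr : rstar ∈ Yᶜ)
    (X : Ω → Fin k → ℝ)
    (hint_r : Integrable (fun ω =>
      (1 / ((Y.card : ℝ) * Yᶜ.card)) *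
        ∑ l ∈ Y, ∑ r ∈ Yᶜ,
          max (1 + (s + Pi.single rstar 1 + X ω : Fin k → ℝ) r -
            (s + Pi.single rstar 1 + X ω : Fin k → ℝ) l) 0) μ)
    (hint_l : Integrable (fun ω =>
      (1 / ((Y.card : ℝ) * Yᶜ.card)) *
        ∑ l ∈ Y, ∑ r ∈ Yᶜ,
          max (1 + (s + Pi.single lstar 1 + X ω : Fin k → ℝ) r -
            (s + Pi.single lstar 1 + X ω : Fin k → ℝ) l) 0) μ) :
    (∫ ω, (1 / ((Y.card : ℝ) * Yᶜ.card)) *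
        ∑ l ∈ Y, ∑ r ∈ Yᶜ,
          max (1 + (s + Pi.single rstar 1 + X ω : Fin k → ℝ) r -
            (s + Pi.single rstar 1 + X ω : Fin k → ℝ) l) 0 ∂μ) -
      (∫ ω, (1 / ((Y.card : ℝ) * Yᶜ.card)) *
        ∑ l ∈ Y, ∑ r ∈ Yᶜ,
          max (1 + (s + Pi.single lstar 1 + X ω : Fin k → ℝ) r -
            (s + Pi.single lstar 1 + X ω : Fin k → ℝ) l) 0 ∂μ) ≤ 2 :=
  stmt_13_general μ k Y s lstar rstar hl hr X hint_r hint_l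
end
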